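/- arXiv:1303.3703 — 3 statements merged into one kernel-verified Lean document; each statement's English description precedes it below -/
import Mathlib

section
/- Let w ∈ (Γ_+)^n and F = (f_1,…,f_n) ∈ Aut_k k[x_1,…,x_n] be such that w_1 ≤ ⋯ ≤ w_n and deg_w f_1 ≤ ⋯ ≤ deg_w f_n. Then deg_w f_i ≥ w_i for i = 1,…,n. -/
open MvPolynomial

noncomputable section

/-- `F` is an elementary automorphism of `k[x_1,…,x_n]`. -/
def IsElementary {k : Type*} [Field k] {n : ℕ}
    (F : MvPolynomial (Fin n) k ≃ₐ[k] MvPolynomial (Fin n) k) : Prop :=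
  ∃ (l : Fin n) (a : k), a ≠ 0 ∧ ∃ p ∈ MvPolynomial.supported k ({l}ᶜ : Set (Fin n)),
    F (X l) = C a * X l + p ∧ ∀ i : Fin n, i ≠ l → F (X i) = X i

/-- The tame subgroup `T_n(k)`. -/
def tameGroup (k : Type*) [Field k] (n : ℕ) :
    Subgroup (MvPolynomial (Fin n) k ≃ₐ[k] MvPolynomial (Fin n) k) :=
  Subgroup.closure {F | IsElementary F}

/-- The `w`-degree of a polynomial, as an element of `WithBot Γ`. -/
def wdeg {k : Type*} [Field k] {Γ : Type*} [AddCommGroup Γ] [LinearOrder Γ] [IsOrderedAddMonoid Γ] {n : ℕ}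
    (w : Fin n → Γ) (f : MvPolynomial (Fin n) k) : WithBot Γ :=
  f.support.sup fun s => ((s.sum fun i e => e • w i : Γ) : WithBot Γ)

/-- The `w`-leading form `f^w` of a polynomial `f`. -/
def wlead {k : Type*} [Field k] {Γ : Type*} [AddCommGroup Γ] [LinearOrder Γ] [IsOrderedAddMonoid Γ] {n : ℕ}
    (w : Fin n → Γ) (f : MvPolynomial (Fin n) k) : MvPolynomial (Fin n) k :=
  (f.support.filter fun s =>
      ((s.sum fun i e => e • w i : Γ) : WithBot Γ) = wdeg w f).sum
    fun s => monomial s (coeff s f)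

/-- `deg_w df∧dg` for two polynomials in three variables. -/
def wedgeDeg2 {k : Type*} [Field k] {Γ : Type*} [AddCommGroup Γ] [LinearOrder Γ] [IsOrderedAddMonoid Γ]
    (w : Fin 3 → Γ) (f g : MvPolynomial (Fin 3) k) : WithBot Γ :=
  max (max
    (wdeg w ((pderiv 0 f * pderiv 1 g - pderiv 1 f * pderiv 0 g) * X 0 * X 1))
    (wdeg w ((pderiv 0 f * pderiv 2 g - pderiv 2 f * pderiv 0 g) * X 0 * X 2)))
    (wdeg w ((pderiv 1 f * pderiv 2 g - pderiv 2 f * pderiv 1 g) * X 1 * X 2))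

/-- The set of values `deg_w df_1∧df_2` over all tame `F` with `deg_w f_1 = d`,
`deg_w f_2 = e`; `Δ_w(d,e)` is its minimum (`∞` for the empty set). -/
def deltaSet (k : Type*) [Field k] {Γ : Type*} [AddCommGroup Γ] [LinearOrder Γ] [IsOrderedAddMonoid Γ]
    (w : Fin 3 → Γ) (d e : Γ) : Set (WithBot Γ) :=
  { δ | ∃ F ∈ tameGroup k 3, wdeg w (F (X 0)) = (d : WithBot Γ) ∧
      wdeg w (F (X 1)) = (e : WithBot Γ) ∧ wedgeDeg2 w (F (X 0)) (F (X 1)) = δ }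

/-- `s = |w|_*` for a weight `w` on three variables. -/
def IsWStar3 {Γ : Type*} [AddCommGroup Γ] [LinearOrder Γ] [IsOrderedAddMonoid Γ] (w : Fin 3 → Γ) (s : Γ) : Prop :=
  ∃ σ : Equiv.Perm (Fin 3), w (σ 0) ≤ w (σ 1) ∧ w (σ 1) ≤ w (σ 2) ∧
    IsLeast ({γ : Γ | (∃ u v : ℕ, 0 < u ∧ 0 < v ∧ γ = u • w (σ 0) + v • w (σ 1)) ∧
      w (σ 0) + w (σ 2) < γ} ∪ {2 • w (σ 0) + w (σ 2)}) s

/-- The order embedding of `Fin (n-1)` into `Fin n` skipping `i`. -/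
def skipIdx {n : ℕ} (i : Fin n) (m : Fin (n - 1)) : Fin n :=
  if m.val < i.val then ⟨m.val, by have := m.isLt; omega⟩
  else ⟨m.val + 1, by have := m.isLt; omega⟩

/-- The `i`-th Jacobian minor of `n-1` polynomials in `n` variables. -/
def jacMinor {k : Type*} [Field k] {n : ℕ}
    (f : Fin (n - 1) → MvPolynomial (Fin n) k) (i : Fin n) : MvPolynomial (Fin n) k :=
  (Matrix.of fun j m : Fin (n - 1) => pderiv (skipIdx i m) (f j)).det

/-- `deg_w df_1∧⋯∧df_{n-1}`. -/
def wdegForm {k : Type*} [Field k] {Γ : Type*} [AddCommGroup Γ] [LinearOrder Γ] [IsOrderedAddMonoid Γ] {n : ℕ}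
    (w : Fin n → Γ) (f : Fin (n - 1) → MvPolynomial (Fin n) k) : WithBot Γ :=
  Finset.univ.sup fun i : Fin n =>
    wdeg w (jacMinor f i * ∏ j ∈ Finset.univ.erase i, (X j : MvPolynomial (Fin n) k))


/-!
If `deg_w f_i < w_i`, then for `j ≤ i` and `t ≥ i` we get `deg_w f_j ≤ deg_w f_i < w_i ≤ w_t`, so no
`f_j` with `j ≤ i` involves a variable `x_t` with `t ≥ i`. The Jacobian matrix of `F` then has a zero
block with `i + 1` rows and `n - i` columns, which forces its determinant to vanish; but by the chain
rule the Jacobian determinant of an automorphism is a unit.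
-/

namespace MvPolynomial

theorem pderiv_algHom_apply {R σ τ : Type*} [CommSemiring R] [Fintype σ]
    (ψ : MvPolynomial σ R →ₐ[R] MvPolynomial τ R) (l : τ) (p : MvPolynomial σ R) :
    pderiv l (ψ p) = ∑ t, ψ (pderiv t p) * pderiv l (ψ (X t)) := by
  classical
  induction p using MvPolynomial.induction_on with
  | C a => simp
  | add p q hp hq => simp only [map_add, hp, hq, add_mul, Finset.sum_add_distrib]
  | mul_X p s hp =>
    simp [hp, pderiv_X, Pi.single_apply, apply_ite ψ, add_mul, Finset.sum_add_distrib,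
      Finset.mul_sum, mul_assoc]

def jacobian {R σ : Type*} [CommSemiring R] (φ : MvPolynomial σ R →ₐ[R] MvPolynomial σ R) :
    Matrix σ σ (MvPolynomial σ R) :=
  Matrix.of fun j t => pderiv t (φ (X j))

theorem isUnit_det_jacobian {R σ : Type*} [CommRing R] [Fintype σ] [DecidableEq σ] (F : MvPolynomial σ R ≃ₐ[R] MvPolynomial σ R) :
    IsUnit (jacobian (F : MvPolynomial σ R →ₐ[R] MvPolynomial σ R)).det := by
  have hchain : (jacobian (F : MvPolynomial σ R →ₐ[R] MvPolynomial σ R)).map F.symm *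
      jacobian (F.symm : MvPolynomial σ R →ₐ[R] MvPolynomial σ R) = 1 := by
    refine Matrix.ext fun j l => ?_
    have h := pderiv_algHom_apply (F.symm : MvPolynomial σ R →ₐ[R] MvPolynomial σ R) l (F (X j))
    simp only [AlgEquiv.coe_toAlgHom, AlgEquiv.symm_apply_apply] at h
    simp [Matrix.mul_apply, jacobian, ← h, Matrix.one_apply, pderiv_X, Pi.single_apply]
  have hunit : IsUnit (F.symm (jacobian (F : MvPolynomial σ R →ₐ[R] MvPolynomial σ R)).det) := by
    rw [AlgEquiv.map_det, AlgEquiv.mapMatrix_apply]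
    exact IsUnit.of_mul_eq_one _ (by rw [← Matrix.det_mul, hchain, Matrix.det_one])
  simpa using hunit.map F

end MvPolynomial

/-- Frobenius–König: every permutation sends some column of the block to a row of the block. -/
theorem Matrix.det_eq_zero_of_zero_block {ι R : Type*} [Fintype ι] [DecidableEq ι] [CommRing R]
    (A : Matrix ι ι R) (rows cols : Finset ι) (hcard : Fintype.card ι < rows.card + cols.card)
    (hA : ∀ i ∈ rows, ∀ j ∈ cols, A i j = 0) : A.det = 0 := by
  rw [Matrix.det_apply]
  refine Finset.sum_eq_zero fun σ _ => ?_
  obtain ⟨_, hmem⟩ := Finset.inter_nonempty_of_card_lt_card_add_card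
    (Finset.subset_univ rows) (Finset.subset_univ (cols.map σ.toEmbedding))
    (by rwa [Finset.card_map, Finset.card_univ])
  obtain ⟨hrow, j, hj, rfl⟩ := Finset.mem_inter.mp hmem |>.imp_right Finset.mem_map.mp
  exact smul_eq_zero_of_right _ <|
    Finset.prod_eq_zero (f := fun i => A (σ i) i) (Finset.mem_univ j) (hA (σ j) hrow j hj)

section WeightedDegree

variable {k : Type*} [Field k] {Γ : Type*} [AddCommGroup Γ] [LinearOrder Γ] [IsOrderedAddMonoid Γ]
  {n : ℕ} {w : Fin n → Γ}

theorem weight_le_wdeg_of_mem_vars (hw : ∀ i, 0 ≤ w i) {f : MvPolynomial (Fin n) k} {t : Fin n}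
    (ht : t ∈ f.vars) : (w t : WithBot Γ) ≤ wdeg w f := by
  obtain ⟨s, hs, hts⟩ := (mem_vars_iff_mem_support t).mp ht
  refine le_trans ?_ (Finset.le_sup (f := fun s => ((s.sum fun i e => e • w i : Γ) : WithBot Γ)) hs)
  rw [WithBot.coe_le_coe]
  calc w t ≤ s t • w t :=
        le_smul_of_one_le_left (hw t) (Nat.one_le_iff_ne_zero.mpr (Finsupp.mem_support_iff.mp hts))
    _ ≤ s.sum fun i e => e • w i :=
        Finset.single_le_sum (f := fun i => s i • w i) (fun l _ => nsmul_nonneg (hw l) (s l)) hts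

theorem pderiv_eq_zero_of_wdeg_lt (hw : ∀ i, 0 ≤ w i) {f : MvPolynomial (Fin n) k} {t : Fin n}
    (h : wdeg w f < w t) : pderiv t f = 0 :=
  pderiv_eq_zero_of_notMem_vars fun ht => (weight_le_wdeg_of_mem_vars hw ht).not_gt h

end WeightedDegree

theorem wdeg_ge_weight_general (k : Type*) [Field k]
    {Γ : Type*} [AddCommGroup Γ] [LinearOrder Γ] [IsOrderedAddMonoid Γ] {n : ℕ}
    (w : Fin n → Γ) (hw : ∀ i, 0 < w i)
    (F : MvPolynomial (Fin n) k ≃ₐ[k] MvPolynomial (Fin n) k)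
    (hwmono : ∀ i j : Fin n, i ≤ j → w i ≤ w j)
    (hfmono : ∀ i j : Fin n, i ≤ j → wdeg w (F (X i)) ≤ wdeg w (F (X j))) :
    ∀ i : Fin n, (w i : WithBot Γ) ≤ wdeg w (F (X i)) := by
  intro i
  by_contra! hlt
  refine (isUnit_det_jacobian F).ne_zero (Matrix.det_eq_zero_of_zero_block
    (jacobian (F : MvPolynomial (Fin n) k →ₐ[k] MvPolynomial (Fin n) k)) (Finset.Iic i)
    (Finset.Ici i) ?_ ?_)
  · rw [Fin.card_Iic, Fin.card_Ici, Fintype.card_fin]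
    omega
  · intro j hj t ht
    exact pderiv_eq_zero_of_wdeg_lt (fun l => (hw l).le) <|
      ((hfmono j i (Finset.mem_Iic.mp hj)).trans_lt hlt).trans_le
        (WithBot.coe_le_coe.mpr (hwmono i t (Finset.mem_Ici.mp ht)))

/-- Lemma `prop:deg F`: if `w` and the `w`-degrees of the components of an
automorphism `F` are both increasing, then `deg_w f_i ≥ w_i` for each `i`. -/
theorem wdeg_ge_weight (k : Type*) [Field k] [CharZero k]
    {Γ : Type*} [AddCommGroup Γ] [LinearOrder Γ] [IsOrderedAddMonoid Γ] {n : ℕ}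
    (w : Fin n → Γ) (hw : ∀ i, 0 < w i)
    (F : MvPolynomial (Fin n) k ≃ₐ[k] MvPolynomial (Fin n) k)
    (hwmono : ∀ i j : Fin n, i ≤ j → w i ≤ w j)
    (hfmono : ∀ i j : Fin n, i ≤ j → wdeg w (F (X i)) ≤ wdeg w (F (X j))) :
    ∀ i : Fin n, (w i : WithBot Γ) ≤ wdeg w (F (X i)) :=
  wdeg_ge_weight_general k w hw F hwmono hfmono
end
end

section
/- Let n ≥ 3 and let w ∈ (Γ_+)^n be such that w_1 ≤ ⋯ ≤ w_n. Let f_1,…,f_{n−1} ∈ k[x_1,…,x_n] be algebraically independent over k, and let h_1,…,h_n be the Jacobian minors of (f_1,…,f_{n−1}). If deg_w df_1∧⋯∧df_{n−1} < |w|_*, then h_1,…,h_{n−1} are constants (elements of k), h_n belongs to k[x_1,…,x_{n−1}], and deg_w h_n ≤ w_n − w_{n−1}. -/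
open MvPolynomial

noncomputable section

/-!
Multiplying `h_i` by `∏_{j ≠ i} x_j` raises the weight of each of its monomials by
`|w| - w_i`, so `deg_w df_1∧⋯∧df_{n-1} < |w|_* ≤ |w| + w_1 - w_{n-1}` says that every monomial
`s` of `h_i` has weight `< w_i + w_1 - w_{n-1}`. For `i < n` this is below `w_1`, the least weight
of a variable, so `h_i` is constant; for `i = n` it is below `w_n`, so `x_n` does not occur in
`h_n`. Then every monomial of `h_n x_1⋯x_{n-1}` has positive exponents in exactly
`x_1, …, x_{n-1}`, so its weight lies in `ℕw_1 + ⋯ + ℕw_{n-1}`; being below `|w|_*`, it is at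
most `|w| - w_{n-1}`, which bounds the weight of `s` by `w_n - w_{n-1}`.
-/

section Weight

variable {σ R M : Type*} [CommSemiring R]

theorem MvPolynomial.prod_X_eq_monomial (A : Finset σ) :
    ∏ j ∈ A, (X j : MvPolynomial σ R) = monomial (∑ j ∈ A, Finsupp.single j 1) 1 := by
  simp only [X, monomial_sum_one]

variable [AddCommMonoid M]

theorem Finsupp.weight_sum_single_one (w : σ → M) (A : Finset σ) :
    Finsupp.weight w (∑ j ∈ A, Finsupp.single j 1) = ∑ j ∈ A, w j := by
  simp [Finsupp.weight_single]

theorem exists_pos_nsmul_sum_eq_weight_add_sum_erase {n : ℕ} (hn : 0 < n) (w : Fin n → M)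
    {s : Fin n →₀ ℕ} (hs : s ⟨n - 1, by omega⟩ = 0) :
    ∃ u : Fin n → ℕ, (∀ i : Fin n, (i.val < n - 1 → 0 < u i) ∧ (¬ i.val < n - 1 → u i = 0)) ∧
      Finsupp.weight w s + ∑ j ∈ Finset.univ.erase ⟨n - 1, by omega⟩, w j = ∑ i, u i • w i := by
  set last : Fin n := ⟨n - 1, by omega⟩
  set t := s + ∑ j ∈ Finset.univ.erase last, Finsupp.single j 1
  have ht : ∀ j, t j = s j + if j = last then 0 else 1 := by
    intro j
    simp [t, Finsupp.single_apply]
  refine ⟨t, fun j => ⟨fun hj => ?_, fun hj => ?_⟩, ?_⟩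
  · rw [ht, if_neg (fun h => (h ▸ hj).false)]
    omega
  · have hjl : j = last := Fin.ext (show j.val = n - 1 by omega)
    rw [ht, if_pos hjl, hjl, hs]
  · rw [← Finsupp.weight_eq_sum, map_add, Finsupp.weight_sum_single_one]

variable [PartialOrder M] [IsOrderedAddMonoid M]

theorem MvPolynomial.mem_supported_of_weight_lt {w : σ → M} (hw : ∀ i, 0 ≤ w i)
    {p : MvPolynomial σ R} {t : Set σ}
    (h : ∀ s ∈ p.support, ∀ j ∉ t, Finsupp.weight w s < w j) : p ∈ supported R t := by
  rw [mem_supported]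
  intro j hj
  obtain ⟨s, hs, hjs⟩ := (mem_vars_iff_mem_support j).1 hj
  by_contra hjt
  exact (h s hs j hjt).not_ge (Finsupp.le_weight_of_ne_zero hw (Finsupp.mem_support_iff.1 hjs))

theorem MvPolynomial.exists_eq_C_of_weight_lt {w : σ → M} (hw : ∀ i, 0 ≤ w i)
    {p : MvPolynomial σ R} (h : ∀ s ∈ p.support, ∀ j, Finsupp.weight w s < w j) :
    ∃ c, p = C c := by
  have hp : p ∈ (⊥ : Subalgebra R (MvPolynomial σ R)) := by
    rw [← supported_empty]
    exact mem_supported_of_weight_lt hw fun s hs j _ => h s hs j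
  obtain ⟨c, hc⟩ := Algebra.mem_bot.1 hp
  exact ⟨c, hc.symm⟩

end Weight

section WDeg

variable {k : Type*} [Field k] {Γ : Type*} [AddCommGroup Γ] [LinearOrder Γ]
  [IsOrderedAddMonoid Γ] {n : ℕ}

theorem weight_add_le_wdeg_mul_monomial (w : Fin n → Γ) {p : MvPolynomial (Fin n) k}
    {s : Fin n →₀ ℕ} (hs : s ∈ p.support) (m : Fin n →₀ ℕ) :
    (Finsupp.weight w (s + m) : WithBot Γ) ≤ wdeg w (p * monomial m 1) := by
  refine Finset.le_sup (f := fun t => (Finsupp.weight w t : WithBot Γ)) ?_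
  rw [mem_support_iff, coeff_mul_monomial, mul_one]
  exact mem_support_iff.1 hs

theorem weight_add_sum_erase_lt_of_wdegForm_lt {w : Fin n → Γ}
    {f : Fin (n - 1) → MvPolynomial (Fin n) k} {B : Γ} (h : wdegForm w f < B) (i : Fin n)
    {s : Fin n →₀ ℕ} (hs : s ∈ (jacMinor f i).support) :
    Finsupp.weight w s + ∑ j ∈ Finset.univ.erase i, w j < B := by
  have hi := (Finset.le_sup (Finset.mem_univ i)).trans_lt h
  rw [prod_X_eq_monomial] at hi
  have := (weight_add_le_wdeg_mul_monomial w hs _).trans_lt hi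
  rwa [map_add, Finsupp.weight_sum_single_one, WithBot.coe_lt_coe] at this

theorem weight_add_lt_of_wdegForm_lt_sum_add_sub {w : Fin n → Γ}
    {f : Fin (n - 1) → MvPolynomial (Fin n) k} {a b : Γ}
    (h : wdegForm w f < ((∑ j, w j + a - b : Γ) : WithBot Γ)) (i : Fin n)
    {s : Fin n →₀ ℕ} (hs : s ∈ (jacMinor f i).support) :
    Finsupp.weight w s + b < w i + a := by
  have hs' := weight_add_sum_erase_lt_of_wdegForm_lt h i hs
  rw [← Finset.sum_erase_add _ _ (Finset.mem_univ i), ← sub_pos] at hs'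
  rw [← sub_pos]
  convert hs' using 1
  abel

end WDeg

/-- Lemma `lem:h_i`: if `deg_w df_1∧⋯∧df_{n-1} < |w|_*`, then the Jacobian minors
`h_1,…,h_{n-1}` are constants, `h_n ∈ k[x_1,…,x_{n-1}]` and
`deg_w h_n ≤ w_n − w_{n-1}`. -/
theorem lem_h_i (k : Type*) [Field k]
    {Γ : Type*} [AddCommGroup Γ] [LinearOrder Γ] [IsOrderedAddMonoid Γ]
    (n : ℕ) (hn : 3 ≤ n) (w : Fin n → Γ) (hw : ∀ i, 0 < w i)
    (hmono : ∀ i j : Fin n, i ≤ j → w i ≤ w j)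
    (f : Fin (n - 1) → MvPolynomial (Fin n) k)
    (wstar : Γ)
    (hstar : IsLeast ({γ : Γ |
        (∃ u : Fin n → ℕ, (∀ i : Fin n,
            (i.val < n - 1 → 0 < u i) ∧ (¬ i.val < n - 1 → u i = 0)) ∧
          γ = ∑ i, u i • w i) ∧
        (∑ i, w i) - w ⟨n - 2, by omega⟩ < γ} ∪
      {(∑ i, w i) + w ⟨0, by omega⟩ - w ⟨n - 2, by omega⟩}) wstar)
    (hdeg : wdegForm w f < (wstar : WithBot Γ)) :
    (∀ i : Fin n, i.val < n - 1 → ∃ c : k, jacMinor f i = C c) ∧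
    jacMinor f ⟨n - 1, by omega⟩ ∈
      MvPolynomial.supported k ({(⟨n - 1, by omega⟩ : Fin n)}ᶜ : Set (Fin n)) ∧
    wdeg w (jacMinor f ⟨n - 1, by omega⟩) ≤
      ((w ⟨n - 1, by omega⟩ - w ⟨n - 2, by omega⟩ : Γ) : WithBot Γ) := by
  set first : Fin n := ⟨0, by omega⟩
  set pen : Fin n := ⟨n - 2, by omega⟩
  set last : Fin n := ⟨n - 1, by omega⟩
  have hw' : ∀ i, 0 ≤ w i := fun i => (hw i).le
  have hfirst : ∀ j, w first ≤ w j := fun j => hmono first j (Fin.le_def.2 (Nat.zero_le _))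
  have hbound := weight_add_lt_of_wdegForm_lt_sum_add_sub
    (hdeg.trans_le (WithBot.coe_le_coe.2 (hstar.2 (Or.inr rfl))))
  have hsupp : jacMinor f last ∈ supported k ({last}ᶜ : Set (Fin n)) := by
    refine mem_supported_of_weight_lt hw' fun s hs j hj => ?_
    rw [Set.notMem_compl_iff, Set.mem_singleton_iff] at hj
    subst hj
    exact lt_of_add_lt_add_right ((hbound last hs).trans_le (add_le_add_right (hfirst pen) _))
  refine ⟨fun i hi => exists_eq_C_of_weight_lt hw' fun s hs j => ?_, hsupp, ?_⟩
  · have hip : w i ≤ w pen := hmono _ _ (Fin.le_def.2 (show i.val ≤ n - 2 by omega))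
    have hlt : Finsupp.weight w s < w first := lt_of_add_lt_add_right
      ((hbound i hs).trans_le (by rw [add_comm]; exact add_le_add_right hip _))
    exact hlt.trans_le (hfirst j)
  · refine Finset.sup_le fun s hs => WithBot.coe_le_coe.2 (not_lt.1 fun (hgt : w last - w pen < Finsupp.weight w s) => ?_)
    have hlast : s last = 0 := by
      by_contra h
      exact mem_supported.1 hsupp
        ((mem_vars_iff_mem_support last).2 ⟨s, hs, Finsupp.mem_support_iff.2 h⟩) rfl
    refine (weight_add_sum_erase_lt_of_wdegForm_lt hdeg last hs).not_ge (hstar.2 (Or.inl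
      ⟨exists_pos_nsmul_sum_eq_weight_add_sum_erase (by omega) w hlast, ?_⟩))
    rw [← Finset.sum_erase_add _ _ (Finset.mem_univ last)]
    rw [← sub_pos] at hgt ⊢
    convert hgt using 1
    abel
end
end

section
/- Let d_1 ≤ d_2 ≤ d_3 be positive integers such that d_1 does not divide d_2 and d_3 ∉ {u·d_1 + v·d_2 : u, v nonnegative integers}. Set d_i' = d_i / gcd(d_1,d_2,d_3) for i = 1,2,3. If one of the following conditions holds: (1) d_1' is odd, and d_2' is odd or d_3' is not divisible by 3; (2) d_1 ≠ 2·gcd(d_1,d_3) and d_2' is odd; (3) d_1' is divisible by 2^l for some l ≥ 2, and d_2' and d_3' are odd; (4) d_3 is a prime number; (5) d_3 − d_2 ≥ d_1 − 2; (6) d_1' is odd, and 3·d_2 ≠ 2·d_3 or 2·d_1 ≤ d_2 + 5; then either (a1) 3·d_2 ≠ 2·d_3 and s·d_1 ≠ 2·d_3 for every odd integer s ≥ 3, or (a2) d_1 + d_2 ≤ d_3 + 2. -/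
/-!
Suppose (a2) fails, i.e. `d3 + 2 < d1 + d2`; together with `d2 ≤ d3` this forces `d1 ≥ 3`.
Write `eᵢ = dᵢ / gcd(d1, d2, d3)`. A relation `3 d2 = 2 d3` descends to `3 e2 = 2 e3`, so `e2` is
even and `3 ∣ e3`; a relation `s d1 = 2 d3` with `s` odd descends to `s e1 = 2 e3`, so `e1` is
even, `d1 = 2 gcd(d1, d3)`, and `e3` is even once `4 ∣ e1`. If `d3` is prime, the two relations
force `d2 = 2` resp. `d1 ∈ {2, 2 d3}`, both incompatible with `3 ≤ d1 ≤ d2 ≤ d3`. Each of the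
conditions (1)–(6) contradicts one of these consequences.
-/

namespace Nat

theorem mul_div_eq_mul_div_of_mul_eq {a b x y g : ℕ} (h : a * x = b * y) (hx : g ∣ x)
    (hy : g ∣ y) : a * (x / g) = b * (y / g) := by
  rw [← Nat.mul_div_assoc _ hx, ← Nat.mul_div_assoc _ hy, h]

theorem even_and_three_dvd_of_three_mul_eq_two_mul {a b : ℕ} (h : 3 * a = 2 * b) :
    Even a ∧ 3 ∣ b := by
  refine ⟨Nat.even_iff.2 ?_, ?_⟩ <;> omega

theorem even_of_odd_mul_eq_two_mul {s a b : ℕ} (hs : Odd s) (h : s * a = 2 * b) : Even a :=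
  (Nat.even_mul.1 (h ▸ even_two_mul b)).resolve_left (Nat.not_even_iff_odd.2 hs)

theorem eq_two_mul_gcd_of_odd_mul_eq_two_mul {s a b : ℕ} (hs : Odd s) (h : s * a = 2 * b) :
    a = 2 * Nat.gcd a b := by
  obtain ⟨m, rfl⟩ := (even_of_odd_mul_eq_two_mul hs h).two_dvd
  obtain rfl : b = s * m := by linarith
  rw [Nat.mul_comm s, Nat.mul_comm 2 m, Nat.gcd_mul_left, Nat.coprime_two_left.2 hs, Nat.mul_one,
    Nat.mul_comm]

theorem even_of_four_dvd_of_mul_eq_two_mul {s a b : ℕ} (ha : 4 ∣ a) (h : s * a = 2 * b) :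
    Even b := by
  obtain ⟨k, rfl⟩ := ha
  exact ⟨s * k, by linarith⟩

theorem Prime.eq_two_of_three_mul_eq_two_mul {p a : ℕ} (hp : p.Prime) (h : 3 * a = 2 * p) :
    a = 2 := by
  have h3 : 3 ∣ p :=
    (Nat.coprime_primes (by norm_num) Nat.prime_two |>.2 (by norm_num)).dvd_of_dvd_mul_left
      ⟨a, h.symm⟩
  have := (Nat.prime_dvd_prime_iff_eq Nat.prime_three hp).1 h3
  omega

theorem Prime.eq_two_or_of_odd_mul_eq_two_mul {p s a : ℕ} (hp : p.Prime) (hs : Odd s)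
    (h : s * a = 2 * p) : a = 2 ∨ a = 2 * p := by
  obtain ⟨m, rfl⟩ := (even_of_odd_mul_eq_two_mul hs h).two_dvd
  have hmp : s * m = p := by linarith
  rcases hp.eq_one_or_self_of_dvd m ⟨s, by rw [← hmp, Nat.mul_comm]⟩ with rfl | rfl
  · exact Or.inl rfl
  · exact Or.inr rfl

end Nat

theorem lem_a_total_general (d1 d2 d3 : ℕ) (h12 : d1 ≤ d2) (h23 : d2 ≤ d3)
    (hcond :
      (Odd (d1 / Nat.gcd (Nat.gcd d1 d2) d3) ∧
        (Odd (d2 / Nat.gcd (Nat.gcd d1 d2) d3) ∨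
          ¬ 3 ∣ d3 / Nat.gcd (Nat.gcd d1 d2) d3)) ∨
      (d1 ≠ 2 * Nat.gcd d1 d3 ∧ Odd (d2 / Nat.gcd (Nat.gcd d1 d2) d3)) ∨
      ((∃ l : ℕ, 2 ≤ l ∧ 2 ^ l ∣ d1 / Nat.gcd (Nat.gcd d1 d2) d3) ∧
        Odd (d2 / Nat.gcd (Nat.gcd d1 d2) d3) ∧
        Odd (d3 / Nat.gcd (Nat.gcd d1 d2) d3)) ∨
      Nat.Prime d3 ∨
      ((d1 : ℤ) - 2 ≤ (d3 : ℤ) - (d2 : ℤ)) ∨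
      (Odd (d1 / Nat.gcd (Nat.gcd d1 d2) d3) ∧
        (3 * d2 ≠ 2 * d3 ∨ 2 * d1 ≤ d2 + 5))) :
    (3 * d2 ≠ 2 * d3 ∧ ∀ s : ℕ, Odd s → 3 ≤ s → s * d1 ≠ 2 * d3) ∨
      d1 + d2 ≤ d3 + 2 := by
  rw [or_iff_not_imp_right, not_le]
  intro hlt
  set g := Nat.gcd (Nat.gcd d1 d2) d3
  have hg1 : g ∣ d1 := (Nat.gcd_dvd_left _ _).trans (Nat.gcd_dvd_left _ _)
  have hg2 : g ∣ d2 := (Nat.gcd_dvd_left _ _).trans (Nat.gcd_dvd_right _ _)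
  have hg3 : g ∣ d3 := Nat.gcd_dvd_right _ _
  refine ⟨fun h => ?_, fun s hs _ h => ?_⟩
  · obtain ⟨he2, he3⟩ := Nat.even_and_three_dvd_of_three_mul_eq_two_mul
      (Nat.mul_div_eq_mul_div_of_mul_eq h hg2 hg3)
    rcases hcond with ⟨-, ho | hn⟩ | ⟨-, ho⟩ | ⟨-, ho, -⟩ | hp | hle | ⟨-, hne | hle⟩
    · exact Nat.not_even_iff_odd.2 ho he2
    · exact hn he3
    · exact Nat.not_even_iff_odd.2 ho he2
    · exact Nat.not_even_iff_odd.2 ho he2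
    · have := hp.eq_two_of_three_mul_eq_two_mul h
      omega
    · omega
    · exact hne h
    · omega
  · have he1 := Nat.even_of_odd_mul_eq_two_mul hs (Nat.mul_div_eq_mul_div_of_mul_eq h hg1 hg3)
    rcases hcond with ⟨ho, -⟩ | ⟨hne, -⟩ | ⟨⟨l, hl, hdvd⟩, -, ho⟩ | hp | hle | ⟨ho, -⟩
    · exact Nat.not_even_iff_odd.2 ho he1
    · exact hne (Nat.eq_two_mul_gcd_of_odd_mul_eq_two_mul hs h)
    · exact Nat.not_even_iff_odd.2 ho <| Nat.even_of_four_dvd_of_mul_eq_two_mul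
        ((Nat.pow_dvd_pow 2 hl).trans hdvd) (Nat.mul_div_eq_mul_div_of_mul_eq h hg1 hg3)
    · have := hp.eq_two_or_of_odd_mul_eq_two_mul hs h
      omega
    · omega
    · exact Nat.not_even_iff_odd.2 ho he1

/-- Lemma `lem:a total`: if `d1 ≤ d2 ≤ d3` satisfy (c) and one of conditions
(1)–(6), then condition (a) holds, where `d_i' = d_i / gcd(d1,d2,d3)`. -/
theorem lem_a_total (d1 d2 d3 : ℕ) (h1 : 0 < d1) (h12 : d1 ≤ d2) (h23 : d2 ≤ d3)
    (hc1 : ¬ d1 ∣ d2) (hc2 : ¬ ∃ u v : ℕ, d3 = u * d1 + v * d2)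
    (hcond :
      (Odd (d1 / Nat.gcd (Nat.gcd d1 d2) d3) ∧
        (Odd (d2 / Nat.gcd (Nat.gcd d1 d2) d3) ∨
          ¬ 3 ∣ d3 / Nat.gcd (Nat.gcd d1 d2) d3)) ∨
      (d1 ≠ 2 * Nat.gcd d1 d3 ∧ Odd (d2 / Nat.gcd (Nat.gcd d1 d2) d3)) ∨
      ((∃ l : ℕ, 2 ≤ l ∧ 2 ^ l ∣ d1 / Nat.gcd (Nat.gcd d1 d2) d3) ∧
        Odd (d2 / Nat.gcd (Nat.gcd d1 d2) d3) ∧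
        Odd (d3 / Nat.gcd (Nat.gcd d1 d2) d3)) ∨
      Nat.Prime d3 ∨
      ((d1 : ℤ) - 2 ≤ (d3 : ℤ) - (d2 : ℤ)) ∨
      (Odd (d1 / Nat.gcd (Nat.gcd d1 d2) d3) ∧
        (3 * d2 ≠ 2 * d3 ∨ 2 * d1 ≤ d2 + 5))) :
    (3 * d2 ≠ 2 * d3 ∧ ∀ s : ℕ, Odd s → 3 ≤ s → s * d1 ≠ 2 * d3) ∨
      d1 + d2 ≤ d3 + 2 :=
  lem_a_total_general d1 d2 d3 h12 h23 hcond
end
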